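/- For distinct indices i, j, l, m ∈ {1,…,k}, E[D^{ij}(0) · D^{lm}(−J,−1)] = 0, where D^{ij}(W) = Cⁱ(W) − Cʲ(W) is the net discrepancy of burger i over burger j and J is the first time before 0 such that X(−J,−1) contains exactly one burger. -/

import Mathlib

open MeasureTheory ProbabilityTheory Filter
open scoped ENNReal NNReal

inductive Symb (k : ℕ) where
  | burger : Fin k → Symb k
  | order  : Fin k → Symb k
  | fresh  : Symb k
deriving DecidableEq

instance {k : ℕ} : MeasurableSpace (Symb k) := ⊤

abbrev Word (k : ℕ) := List (Symb k)

def Symb.isBurger {k : ℕ} : Symb k → Bool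
  | .burger _ => true
  | _ => false

/-- One step of stack reduction: the state is (remaining orders, burger stack). -/
def pushSym {k : ℕ} : Word k × List (Fin k) → Symb k → Word k × List (Fin k)
  | (O, B), .burger i => (O, B ++ [i])
  | (O, B), .order i => if i ∈ B then (O, (B.reverse.erase i).reverse) else (O ++ [.order i], B)
  | (O, B), .fresh => if B.isEmpty then (O ++ [.fresh], B) else (O, B.dropLast)

/-- The reduced form of a word modulo the burger/order relations. -/
def reduce {k : ℕ} (w : Word k) : Word k :=
  let s := w.foldl pushSym ([], [])
  s.1 ++ s.2.map Symb.burger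

/-- The word `X(m) X(m+1) ⋯ X(n)` (unreduced). -/
def seg {k : ℕ} (ω : ℤ → Symb k) (m n : ℤ) : Word k :=
  (List.range (n + 1 - m).toNat).map fun t => ω (m + t)

/-- Net total burger count `C(W)`: burgers minus orders (incl. fresh). -/
def cnt {k : ℕ} (w : Word k) : ℤ :=
  ((w.filter (·.isBurger)).length : ℤ) - ((w.filter (fun s => !s.isBurger)).length : ℤ)

/-- Contribution of a single symbol to the discrepancy `D^{ij}`. -/
def dsym {k : ℕ} (i j : Fin k) : Symb k → ℤ
  | .burger t => if t = i then 1 else if t = j then -1 else 0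
  | .order t => if t = i then -1 else if t = j then 1 else 0
  | .fresh => 0

/-- Discrepancy `D^{ij}(W)` of a word. -/
def dcnt {k : ℕ} (i j : Fin k) (w : Word k) : ℤ := (w.map (dsym i j)).sum

/-- Number of burger symbols in a word. -/
def numBurgers {k : ℕ} (w : Word k) : ℕ := (w.filter (·.isBurger)).length

/-- The order at time `n` consumes the burger at time `m` (i.e. `φ(m) = n`). -/
def MatchedAt {k : ℕ} (ω : ℤ → Symb k) (m n : ℤ) : Prop :=
  m < n ∧ ∃ i : Fin k, ω m = .burger i ∧
    Symb.order i ∉ reduce (seg ω (m+1) (n-1)) ∧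
    Symb.fresh ∉ reduce (seg ω (m+1) (n-1)) ∧
    ((ω n = .order i ∧ Symb.burger i ∉ reduce (seg ω (m+1) (n-1))) ∨
     (ω n = .fresh ∧ ∀ j : Fin k, Symb.burger j ∉ reduce (seg ω (m+1) (n-1))))

open Classical in
/-- The resolved symbol `Y(n)`: a fresh order is replaced by a typed order for
the type of burger it consumes. -/
noncomputable def Ysym {k : ℕ} (ω : ℤ → Symb k) (n : ℤ) : Symb k :=
  match ω n with
  | .fresh =>
      if h : ∃ m, MatchedAt ω m n then
        match ω h.choose with
        | .burger i => .order i
        | _ => .fresh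
      else .fresh
  | s => s

/-- The word `Y(m) ⋯ Y(n)`. -/
noncomputable def Yseg {k : ℕ} (ω : ℤ → Symb k) (m n : ℤ) : Word k :=
  (List.range (n + 1 - m).toNat).map fun t => Ysym ω (m + t)

/-- The one-step distribution of the symbols. -/
noncomputable def symPMF (k : ℕ) (p : ℝ) : Symb k → ℝ≥0∞
  | .burger _ => 1 / (2 * (k : ℝ≥0∞))
  | .order _ => ENNReal.ofReal (1 - p) / (2 * (k : ℝ≥0∞))
  | .fresh => ENNReal.ofReal p / 2

/-! Relabelling burger types by the transposition `(i j)` preserves the law of the i.i.d. symbol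
sequence, commutes with reduction and with the resolution of fresh orders, and therefore fixes `J`
almost surely. It flips the sign of `D^{ij}(0)` and fixes `D^{lm}(-J,-1)`, so the integrand is
anti-invariant under a measure-preserving map and its integral vanishes. -/

namespace MeasureTheory

lemma MeasurePreserving.integral_eq_zero_of_ae_comp_eq_neg {Ω : Type*}
    [MeasurableSpace Ω] {μ : Measure Ω} {T : Ω ≃ᵐ Ω} (hT : MeasurePreserving T μ μ)
    {F : Ω → ℝ} (hF : ∀ᵐ ω ∂μ, F (T ω) = -F ω) : ∫ ω, F ω ∂μ = 0 := by
  have h := hT.integral_comp' F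
  rw [integral_congr_ae hF, integral_neg] at h
  linarith

lemma MeasurePreserving.ae_comp_eq_of_least_pos {Ω : Type*} [MeasurableSpace Ω]
    {μ : Measure Ω} {T : Ω → Ω} (hT : MeasurePreserving T μ μ) {Q : Ω → ℕ → Prop}
    (hQ : ∀ ω n, Q (T ω) n ↔ Q ω n) {J : Ω → ℕ}
    (hJ : ∀ᵐ ω ∂μ, 0 < J ω ∧ Q ω (J ω) ∧ ∀ n, 0 < n → n < J ω → ¬ Q ω n) :
    ∀ᵐ ω ∂μ, J (T ω) = J ω := by
  filter_upwards [hJ, hT.quasiMeasurePreserving.ae hJ]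
    with ω ⟨hpos, hQJ, hfirst⟩ ⟨hpos', hQJ', hfirst'⟩
  rw [hQ] at hQJ'
  simp only [hQ] at hfirst'
  rcases lt_trichotomy (J (T ω)) (J ω) with h | h | h
  · exact absurd hQJ' (hfirst _ hpos' h)
  · exact h
  · exact absurd hQJ (hfirst' _ hpos h)

lemma measurePreserving_piCongrRight_of_iIndepFun {ι α : Type*} [MeasurableSpace α]
    {μ : Measure (ι → α)} [IsProbabilityMeasure μ] (hindep : iIndepFun (fun i ω => ω i) μ)
    (σ : α ≃ᵐ α) (hσ : ∀ i, MeasurePreserving σ (μ.map (· i)) (μ.map (· i))) :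
    MeasurePreserving (MeasurableEquiv.piCongrRight fun _ : ι => σ) μ μ := by
  have (i : ι) : IsProbabilityMeasure (μ.map (· i)) :=
    Measure.isProbabilityMeasure_map (measurable_pi_apply i).aemeasurable
  have hμ : μ = Measure.infinitePi fun i => μ.map (· i) := by
    simpa using hindep.map_fun_eq_infinitePi_map measurable_pi_apply
  refine ⟨MeasurableEquiv.measurable _, ?_⟩
  calc μ.map (MeasurableEquiv.piCongrRight fun _ : ι => σ)
      = (Measure.infinitePi fun i => μ.map (· i)).map fun ω i => σ (ω i) := by
        rw [← hμ]; rfl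
    _ = Measure.infinitePi fun i => (μ.map (· i)).map σ :=
      Measure.infinitePi_map_pi _ fun _ => σ.measurable
    _ = μ := by simp_rw [fun i => (hσ i).map_eq]; exact hμ.symm

end MeasureTheory

namespace Symb

variable {k : ℕ}

def relabel (e : Equiv.Perm (Fin k)) : Symb k → Symb k
  | .burger t => .burger (e t)
  | .order t => .order (e t)
  | .fresh => .fresh

@[simp] lemma relabel_burger (e : Equiv.Perm (Fin k)) (t : Fin k) :
    relabel e (.burger t) = .burger (e t) := rfl

@[simp] lemma relabel_order (e : Equiv.Perm (Fin k)) (t : Fin k) :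
    relabel e (.order t) = .order (e t) := rfl

@[simp] lemma relabel_fresh (e : Equiv.Perm (Fin k)) : relabel e .fresh = .fresh := rfl

@[simp] lemma relabel_symm_relabel (e : Equiv.Perm (Fin k)) (s : Symb k) :
    relabel e.symm (relabel e s) = s := by
  cases s <;> simp

@[simp] lemma relabel_relabel_symm (e : Equiv.Perm (Fin k)) (s : Symb k) :
    relabel e (relabel e.symm s) = s := by
  cases s <;> simp

lemma relabel_injective (e : Equiv.Perm (Fin k)) : Function.Injective (relabel e) :=
  Function.LeftInverse.injective (relabel_symm_relabel e)

@[simp] lemma isBurger_relabel (e : Equiv.Perm (Fin k)) (s : Symb k) :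
    (relabel e s).isBurger = s.isBurger := by
  cases s <;> rfl

def relabelEquiv (e : Equiv.Perm (Fin k)) : Symb k ≃ᵐ Symb k where
  toFun := relabel e
  invFun := relabel e.symm
  left_inv := relabel_symm_relabel e
  right_inv := relabel_relabel_symm e
  measurable_toFun := fun _ _ => trivial
  measurable_invFun := fun _ _ => trivial

instance : Countable (Symb k) := by
  refine Function.Injective.countable (f := fun s : Symb k => match s with
    | .burger t => (Sum.inl t : Fin k ⊕ Option (Fin k))
    | .order t => Sum.inr (some t)
    | .fresh => Sum.inr none) ?_
  rintro (_ | _ | _) (_ | _ | _) h <;> simp_all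

end Symb

open Symb

section Relabel

variable {k : ℕ}

def relabelState (e : Equiv.Perm (Fin k)) : Word k × List (Fin k) → Word k × List (Fin k) :=
  Prod.map (List.map (relabel e)) (List.map e)

lemma pushSym_relabel (e : Equiv.Perm (Fin k)) (st : Word k × List (Fin k)) (s : Symb k) :
    pushSym (relabelState e st) (relabel e s) = relabelState e (pushSym st s) := by
  obtain ⟨O, B⟩ := st
  cases s with
  | burger t => simp [pushSym, relabelState]
  | order t =>
    by_cases h : t ∈ B
    · simp [pushSym, relabelState, h, ← List.map_reverse, ← List.map_erase e.injective]
    · simp [pushSym, relabelState, h]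
  | fresh =>
    by_cases h : B = []
    · simp [pushSym, relabelState, h]
    · simp [pushSym, relabelState, h, List.map_dropLast]

lemma foldl_pushSym_relabel (e : Equiv.Perm (Fin k)) (w : Word k) (st : Word k × List (Fin k)) :
    (w.map (relabel e)).foldl pushSym (relabelState e st)
      = relabelState e (w.foldl pushSym st) := by
  induction w generalizing st with
  | nil => rfl
  | cons a w ih => simp [pushSym_relabel, ih]

lemma reduce_map_relabel (e : Equiv.Perm (Fin k)) (w : Word k) :
    reduce (w.map (relabel e)) = (reduce w).map (relabel e) := by
  have h := foldl_pushSym_relabel e w ([], [])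
  simp only [relabelState, Prod.map, List.map_nil] at h
  simp [reduce, h, List.map_map, Function.comp_def]

lemma seg_relabel (e : Equiv.Perm (Fin k)) (ω : ℤ → Symb k) (a b : ℤ) :
    seg (relabel e ∘ ω) a b = (seg ω a b).map (relabel e) := by
  simp [seg, List.map_map, Function.comp_def]

lemma numBurgers_map_relabel (e : Equiv.Perm (Fin k)) (w : Word k) :
    numBurgers (w.map (relabel e)) = numBurgers w := by
  simp [numBurgers, List.filter_map, Function.comp_def]

lemma numBurgers_reduce_seg_relabel (e : Equiv.Perm (Fin k)) (ω : ℤ → Symb k) (a b : ℤ) :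
    numBurgers (reduce (seg (relabel e ∘ ω) a b)) = numBurgers (reduce (seg ω a b)) := by
  rw [seg_relabel, reduce_map_relabel, numBurgers_map_relabel]

lemma relabel_mem_reduce_seg_iff (e : Equiv.Perm (Fin k)) (ω : ℤ → Symb k) (a b : ℤ)
    (s : Symb k) :
    relabel e s ∈ reduce (seg (relabel e ∘ ω) a b) ↔ s ∈ reduce (seg ω a b) := by
  rw [seg_relabel, reduce_map_relabel, List.mem_map_of_injective (relabel_injective e)]

lemma MatchedAt.relabel {ω : ℤ → Symb k} {a b : ℤ} (h : MatchedAt ω a b)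
    (e : Equiv.Perm (Fin k)) :
    MatchedAt (Symb.relabel e ∘ ω) a b := by
  obtain ⟨hab, i, hωa, hord, hfresh, hn⟩ := h
  refine ⟨hab, e i, by simp [hωa], ?_, ?_, ?_⟩
  · rwa [← relabel_order, relabel_mem_reduce_seg_iff]
  · rwa [← relabel_fresh e, relabel_mem_reduce_seg_iff]
  · rcases hn with ⟨hωb, hbur⟩ | ⟨hωb, hbur⟩
    · exact .inl ⟨by simp [hωb], by rwa [← relabel_burger, relabel_mem_reduce_seg_iff]⟩
    · refine .inr ⟨by simp [hωb], fun t => ?_⟩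
      rw [← relabel_relabel_symm e (.burger t), relabel_mem_reduce_seg_iff]
      exact hbur _

lemma matchedAt_relabel_iff (e : Equiv.Perm (Fin k)) (ω : ℤ → Symb k) (a b : ℤ) :
    MatchedAt (relabel e ∘ ω) a b ↔ MatchedAt ω a b := by
  refine ⟨fun h => ?_, fun h => h.relabel e⟩
  simpa [← Function.comp_assoc, Function.comp_def] using h.relabel e.symm

lemma Ysym_relabel (e : Equiv.Perm (Fin k)) (ω : ℤ → Symb k) (n : ℤ) :
    Ysym (relabel e ∘ ω) n = relabel e (Ysym ω n) := by
  cases hω : ω n with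
  | burger t => simp [Ysym, hω]
  | order t => simp [Ysym, hω]
  | fresh =>
    have hP : (fun m => MatchedAt (relabel e ∘ ω) m n) = fun m => MatchedAt ω m n :=
      funext fun m => propext (matchedAt_relabel_iff e ω m n)
    simp only [Ysym, Function.comp_apply, hω, relabel_fresh]
    -- `simp` cannot rewrite the condition of the `dite`, whose branch mentions `h.choose`
    rw [hP]
    split_ifs with h
    · obtain ⟨-, i, hb, -⟩ := h.choose_spec
      simp [hb]
    · rfl

lemma Yseg_relabel (e : Equiv.Perm (Fin k)) (ω : ℤ → Symb k) (a b : ℤ) :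
    Yseg (relabel e ∘ ω) a b = (Yseg ω a b).map (relabel e) := by
  simp [Yseg, Ysym_relabel]

lemma dsym_relabel (e : Equiv.Perm (Fin k)) (i j : Fin k) (s : Symb k) :
    dsym (e i) (e j) (relabel e s) = dsym i j s := by
  cases s <;> simp [dsym]

lemma dsym_comm {i j : Fin k} (hij : i ≠ j) (s : Symb k) : dsym j i s = - dsym i j s := by
  cases s with
  | burger t => by_cases t = i <;> by_cases t = j <;> simp_all [dsym]
  | order t => by_cases t = i <;> by_cases t = j <;> simp_all [dsym]
  | fresh => rfl

lemma dsym_relabel_swap {i j : Fin k} (hij : i ≠ j) (s : Symb k) :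
    dsym i j (relabel (Equiv.swap i j) s) = - dsym i j s := by
  simpa [dsym_comm hij] using dsym_relabel (Equiv.swap i j) j i s

lemma dcnt_map_relabel (e : Equiv.Perm (Fin k)) (i j : Fin k) (w : Word k) :
    dcnt (e i) (e j) (w.map (relabel e)) = dcnt i j w := by
  simp [dcnt, Function.comp_def, dsym_relabel]

lemma dcnt_map_relabel_swap_of_ne {i j l m : Fin k} (hil : i ≠ l) (him : i ≠ m)
    (hjl : j ≠ l) (hjm : j ≠ m) (w : Word k) :
    dcnt l m (w.map (relabel (Equiv.swap i j))) = dcnt l m w := by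
  simpa [Equiv.swap_apply_of_ne_of_ne hil.symm hjl.symm,
    Equiv.swap_apply_of_ne_of_ne him.symm hjm.symm] using
    dcnt_map_relabel (Equiv.swap i j) l m w

lemma symPMF_relabel (e : Equiv.Perm (Fin k)) (p : ℝ) (s : Symb k) :
    symPMF k p (relabel e s) = symPMF k p s := by
  cases s <;> rfl

end Relabel

lemma measurePreserving_relabelEquiv_map_eval {k : ℕ} {p : ℝ} {μ : Measure (ℤ → Symb k)}
    (hdist : ∀ (n : ℤ) (s : Symb k), μ {ω | ω n = s} = symPMF k p s)
    (e : Equiv.Perm (Fin k)) (n : ℤ) :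
    MeasurePreserving (relabelEquiv e) (μ.map (· n)) (μ.map (· n)) := by
  refine ⟨MeasurableEquiv.measurable _, Measure.ext_of_singleton fun s => ?_⟩
  have hpre : (fun ω : ℤ → Symb k => ω n) ⁻¹' (relabelEquiv e ⁻¹' {s})
      = {ω | ω n = relabel e.symm s} := by
    ext ω
    simp only [Set.mem_preimage, Set.mem_singleton_iff, Set.mem_ofPred_eq]
    exact (relabelEquiv e).toEquiv.eq_symm_apply.symm
  rw [Measure.map_apply (MeasurableEquiv.measurable _) (measurableSet_singleton s),
    Measure.map_apply (measurable_pi_apply n) (MeasurableSet.of_discrete),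
    Measure.map_apply (measurable_pi_apply n) (measurableSet_singleton s), hpre]
  simp only [Set.preimage, Set.mem_singleton_iff, hdist, symPMF_relabel]

theorem stmt6_general (k : ℕ) (p : ℝ)
    (μ : Measure (ℤ → Symb k)) [IsProbabilityMeasure μ]
    (hindep : iIndepFun
      (fun n ω => ω n) μ)
    (hdist : ∀ (n : ℤ) (s : Symb k), μ {ω | ω n = s} = symPMF k p s)
    (J : (ℤ → Symb k) → ℕ)
    (hJ : ∀ᵐ ω ∂μ, 0 < J ω ∧
      numBurgers (reduce (seg ω (-(J ω : ℤ)) (-1))) = 1 ∧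
      ∀ j : ℕ, 0 < j → j < J ω → numBurgers (reduce (seg ω (-(j : ℤ)) (-1))) ≠ 1)
    (i j l m : Fin k) (hij : i ≠ j) (hil : i ≠ l) (him : i ≠ m)
    (hjl : j ≠ l) (hjm : j ≠ m) :
    ∫ ω, ((dsym i j (Ysym ω 0) * dcnt l m (Yseg ω (-(J ω : ℤ)) (-1)) : ℤ) : ℝ) ∂μ
      = 0 := by
  set T := MeasurableEquiv.piCongrRight fun _ : ℤ => relabelEquiv (Equiv.swap i j)
  have hTω (ω : ℤ → Symb k) : T ω = relabel (Equiv.swap i j) ∘ ω := rfl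
  have hT : MeasurePreserving T μ μ :=
    measurePreserving_piCongrRight_of_iIndepFun hindep _
      (measurePreserving_relabelEquiv_map_eval hdist _)
  have hJT : ∀ᵐ ω ∂μ, J (T ω) = J ω :=
    hT.ae_comp_eq_of_least_pos (Q := fun ω n => numBurgers (reduce (seg ω (-n) (-1))) = 1)
      (fun ω n => by rw [hTω, numBurgers_reduce_seg_relabel]) hJ
  refine hT.integral_eq_zero_of_ae_comp_eq_neg ?_
  filter_upwards [hJT] with ω hJω
  rw [hJω, hTω, Ysym_relabel, Yseg_relabel, dsym_relabel_swap hij,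
    dcnt_map_relabel_swap_of_ne hil him hjl hjm]
  push_cast
  ring

/-- For distinct indices `i, j, l, m`, `E[D^{ij}(0) · D^{lm}(-J,-1)] = 0`. -/
theorem stmt6 (k : ℕ) (hk : 4 ≤ k) (p : ℝ) (hp0 : 0 ≤ p) (hp1 : p ≤ 1)
    (μ : Measure (ℤ → Symb k)) [IsProbabilityMeasure μ]
    (hindep : iIndepFun
      (fun n ω => ω n) μ)
    (hdist : ∀ (n : ℤ) (s : Symb k), μ {ω | ω n = s} = symPMF k p s)
    (J : (ℤ → Symb k) → ℕ)
    (hJ : ∀ᵐ ω ∂μ, 0 < J ω ∧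
      numBurgers (reduce (seg ω (-(J ω : ℤ)) (-1))) = 1 ∧
      ∀ j : ℕ, 0 < j → j < J ω → numBurgers (reduce (seg ω (-(j : ℤ)) (-1))) ≠ 1)
    (i j l m : Fin k) (hij : i ≠ j) (hlm : l ≠ m) (hil : i ≠ l) (him : i ≠ m)
    (hjl : j ≠ l) (hjm : j ≠ m) :
    ∫ ω, ((dsym i j (Ysym ω 0) * dcnt l m (Yseg ω (-(J ω : ℤ)) (-1)) : ℤ) : ℝ) ∂μ
      = 0 :=
  stmt6_general k p μ hindep hdist J hJ i j l m hij hil him hjl hjm
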